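/- arXiv:1811.01651 — 2 statements merged into one kernel-verified Lean document; each statement's English description precedes it below -/
import Mathlib

section
/- Let p and q be real numbers with 0 ≤ p ≤ 1 and 0 ≤ q ≤ 1. Consider the probability distribution on Bool obtained by first sampling t from a Bernoulli distribution with success probability p, and then outputting true with probability 1 − q/2 if t = true and with probability 1/2 − q/2 if t = false. Then the probability of outputting true equals 1/2 + (p − q)/2. Consequently, for any real ε > 0: if p ≥ q + ε then the probability of outputting true is at least 1/2 + ε/2, and if p ≤ q − ε then the probability of outputting false is at least 1/2 + ε/2. -/
set_option linter.deprecated false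

open scoped NNReal ENNReal

namespace PMF

theorem bernoulli_bind_bernoulli_apply_true (p : ℝ≥0) (hp : p ≤ 1) (r : Bool → ℝ≥0)
    (hr : ∀ t, r t ≤ 1) :
    ((bernoulli p hp).bind fun t => bernoulli (r t) (hr t)) true =
      ↑(p * r true + (1 - p) * r false) := by
  simp [bind_apply, bernoulli_apply, ENNReal.coe_sub]

theorem apply_false_eq_one_sub_apply_true (μ : PMF Bool) : μ false = 1 - μ true :=
  ENNReal.eq_sub_of_add_eq (μ.apply_ne_top true) (by simpa [add_comm] using μ.tsum_coe)

end PMF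

theorem ENNReal.coe_toNNReal_convex_combination {p a b : ℝ} (hp0 : 0 ≤ p) (hp1 : p ≤ 1)
    (ha : 0 ≤ a) (hb : 0 ≤ b) :
    ((p.toNNReal * a.toNNReal + (1 - p.toNNReal) * b.toNNReal : ℝ≥0) : ℝ≥0∞) =
      ENNReal.ofReal (p * a + (1 - p) * b) := by
  have hmix : 0 ≤ p * a + (1 - p) * b := by
    have : 0 ≤ 1 - p := by linarith
    positivity
  rw [ENNReal.ofReal, ENNReal.coe_inj, ← NNReal.coe_inj, Real.coe_toNNReal _ hmix,
    NNReal.coe_add, NNReal.coe_mul, NNReal.coe_mul, NNReal.coe_sub (Real.toNNReal_le_one.mpr hp1),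
    NNReal.coe_one, Real.coe_toNNReal _ hp0, Real.coe_toNNReal _ ha, Real.coe_toNNReal _ hb]

theorem stmt_5 (p q : ℝ) (hp0 : 0 ≤ p) (hp1 : p ≤ 1) (hq0 : 0 ≤ q) (hq1 : q ≤ 1)
    (μ : PMF Bool)
    (hμ : μ = (PMF.bernoulli (Real.toNNReal p)
        (by rw [Real.toNNReal_le_one]; exact hp1)).bind
      (fun t => PMF.bernoulli
        (Real.toNNReal (if t then 1 - q / 2 else 1 / 2 - q / 2))
        (by rw [Real.toNNReal_le_one]; cases t <;> simp <;> linarith))) :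
    μ true = ENNReal.ofReal (1 / 2 + (p - q) / 2) ∧
    ∀ ε : ℝ, 0 < ε →
      (p ≥ q + ε → ENNReal.ofReal (1 / 2 + ε / 2) ≤ μ true) ∧
      (p ≤ q - ε → ENNReal.ofReal (1 / 2 + ε / 2) ≤ μ false) := by
  have htrue : μ true = ENNReal.ofReal (1 / 2 + (p - q) / 2) := by
    rw [hμ, PMF.bernoulli_bind_bernoulli_apply_true, if_pos rfl, if_neg Bool.false_ne_true,
      ENNReal.coe_toNNReal_convex_combination hp0 hp1 (by linarith) (by linarith)]
    ring_nf
  have hfalse : μ false = ENNReal.ofReal (1 / 2 + (q - p) / 2) := by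
    rw [μ.apply_false_eq_one_sub_apply_true, htrue, ← ENNReal.ofReal_one,
      ← ENNReal.ofReal_sub _ (by linarith)]
    ring_nf
  refine ⟨htrue, fun ε _ => ⟨fun hpq => ?_, fun hpq => ?_⟩⟩
  · exact htrue ▸ ENNReal.ofReal_le_ofReal (by linarith)
  · exact hfalse ▸ ENNReal.ofReal_le_ofReal (by linarith)
end

section
/- Let p be a real number with 0 ≤ p ≤ 1, and let μ_p be the probability distribution on Bool × Bool obtained as follows: sample r uniformly from Bool; independently sample t from a Bernoulli distribution with success probability p; then sample s from a Bernoulli distribution whose success probability is 1 if (r, t) = (true, true), 0 if (r, t) = (false, true), and 1/2 if t = false; output the pair (r, s). Then μ_p assigns probability 1/4 + p/4 to the event { (r, s) | r = true and s = true }. Consequently, since μ_p assigns probability 1/2 to { (r, s) | s = true }, the conditional probability of r = true given s = true equals 1/2 + p/2. -/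
/-!
Splitting on `t`: with probability `q` the bit `s` copies `r`, which contributes `q / 2` to
`Pr(r ∧ s)`, and otherwise `s` is a fair coin independent of `r`, which contributes `(1 - q) / 4`.
The same split gives `Pr(¬r ∧ s) = (1 - q) / 4`, so `Pr(s) = 1 / 2` and
`Pr(r | s) = (1 + q) / 2`.
-/

set_option linter.deprecated false

open scoped ENNReal NNReal

namespace PMF

variable {α β : Type*}

theorem toOuterMeasure_fst_eq_and_snd_eq (μ : PMF (α × β)) (a : α) (b : β) :
    μ.toOuterMeasure {x | x.1 = a ∧ x.2 = b} = μ (a, b) := by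
  rw [← toOuterMeasure_apply_singleton]
  congr 1
  ext ⟨x, y⟩
  simp

theorem toOuterMeasure_snd_eq (μ : PMF (Bool × β)) (b : β) :
    μ.toOuterMeasure {x | x.2 = b} = μ (true, b) + μ (false, b) := by
  classical
  have hset : {x : Bool × β | x.2 = b} = ↑({(true, b), (false, b)} : Finset (Bool × β)) := by
    ext ⟨x, y⟩
    cases x <;> simp [eq_comm]
  rw [hset, toOuterMeasure_apply_finset, Finset.sum_pair (by simp)]

end PMF

theorem ENNReal.one_add_toNNReal_div_ofNat {p : ℝ} (hp : 0 ≤ p) (n : ℕ) [n.AtLeastTwo] :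
    ((1 + p.toNNReal) / ofNat(n) : ℝ≥0∞) = ENNReal.ofReal (1 / ofNat(n) + p / ofNat(n)) := by
  change (1 + ENNReal.ofReal p) / _ = _
  rw [← ENNReal.ofReal_one, ← ENNReal.ofReal_add zero_le_one hp, ← ENNReal.ofReal_ofNat n,
    ← ENNReal.ofReal_div_of_pos Nat.ofNat_pos]
  congr 1
  ring

/-- The bits `r`, `t`, `s` are the nodes `R`, `T_H`, `S` of the paper's gadget, with
`q = Pr(h)`. -/
noncomputable def inferenceGadget (q : ℝ≥0) (hq : q ≤ 1) : PMF (Bool × Bool) :=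
  (PMF.bernoulli (1 / 2) (by norm_num)).bind fun r =>
    (PMF.bernoulli q hq).bind fun t =>
      (PMF.bernoulli (if t then (if r then 1 else 0) else 1 / 2)
          (by cases t <;> cases r <;> simp)).map fun s => (r, s)

section inferenceGadget

variable (q : ℝ≥0) (hq : q ≤ 1)

theorem inferenceGadget_apply_true_true : inferenceGadget q hq (true, true) = (1 + q) / 4 :=
  calc inferenceGadget q hq (true, true) = 2⁻¹ * (q * 1 + (1 - q) * 2⁻¹) := by
        simp [inferenceGadget, PMF.bind_apply, PMF.map_apply, PMF.bernoulli_apply]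
    _ = (1 + q) / 4 := by
        rw [← ENNReal.coe_one, ← ENNReal.coe_sub, ← ENNReal.coe_inv_two]
        norm_cast
        rw [← NNReal.coe_inj]
        push_cast [hq]
        ring

theorem inferenceGadget_apply_false_true : inferenceGadget q hq (false, true) = (1 - q) / 4 :=
  calc inferenceGadget q hq (false, true) = 2⁻¹ * (q * 0 + (1 - q) * 2⁻¹) := by
        simp [inferenceGadget, PMF.bind_apply, PMF.map_apply, PMF.bernoulli_apply]
    _ = (1 - q) / 4 := by
        rw [← ENNReal.coe_one, ← ENNReal.coe_sub, ← ENNReal.coe_inv_two]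
        norm_cast
        rw [← NNReal.coe_inj]
        push_cast [hq]
        ring

theorem inferenceGadget_snd_eq_true :
    (inferenceGadget q hq).toOuterMeasure {x | x.2 = true} = 2⁻¹ := by
  rw [PMF.toOuterMeasure_snd_eq, inferenceGadget_apply_true_true, inferenceGadget_apply_false_true,
    ← ENNReal.coe_one, ← ENNReal.coe_sub, ← ENNReal.coe_inv_two]
  norm_cast
  rw [← NNReal.coe_inj]
  push_cast [hq]
  ring

theorem inferenceGadget_cond_fst_eq_true :
    (inferenceGadget q hq).toOuterMeasure {x | x.1 = true ∧ x.2 = true} /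
        (inferenceGadget q hq).toOuterMeasure {x | x.2 = true} = (1 + q) / 2 := by
  rw [PMF.toOuterMeasure_fst_eq_and_snd_eq, inferenceGadget_apply_true_true,
    inferenceGadget_snd_eq_true, ← ENNReal.coe_inv_two]
  norm_cast
  rw [← NNReal.coe_inj]
  push_cast
  ring

end inferenceGadget

theorem stmt_7 (p : ℝ) (hp0 : 0 ≤ p) (hp1 : p ≤ 1)
    (μ : PMF (Bool × Bool))
    (hμ : μ = (PMF.bernoulli (1 / 2) (by norm_num)).bind (fun r =>
      (PMF.bernoulli (Real.toNNReal p)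
          (by rw [Real.toNNReal_le_one]; exact hp1)).bind (fun t =>
        (PMF.bernoulli (if t then (if r then 1 else 0) else 1 / 2)
            (by cases t <;> cases r <;> simp [ENNReal.half_le_self])).map (fun s => (r, s))))) :
    μ.toOuterMeasure {x : Bool × Bool | x.1 = true ∧ x.2 = true}
        = ENNReal.ofReal (1 / 4 + p / 4) ∧
    μ.toOuterMeasure {x : Bool × Bool | x.1 = true ∧ x.2 = true} /
        μ.toOuterMeasure {x : Bool × Bool | x.2 = true}
        = ENNReal.ofReal (1 / 2 + p / 2) := by
  have hgadget : μ = inferenceGadget p.toNNReal (Real.toNNReal_le_one.mpr hp1) := hμ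
  subst hgadget
  refine ⟨?_, ?_⟩
  · rw [PMF.toOuterMeasure_fst_eq_and_snd_eq, inferenceGadget_apply_true_true]
    exact ENNReal.one_add_toNNReal_div_ofNat hp0 4
  · rw [inferenceGadget_cond_fst_eq_true]
    exact ENNReal.one_add_toNNReal_div_ofNat hp0 2
end
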